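/- arXiv:1709.01339 — 5 statements merged into one kernel-verified Lean document; each statement's English description precedes it below -/
import Mathlib

section
/- Let n ≥ 1, let τ_i > 0 for i = 1,…,n, and let 0 ≤ α_1 < α_2 < … < α_n < 1. Then the function f(s) = Σ_{i=1}^{n} τ_i s^{α_i} (using the principal branch of the complex power) has no zeros in ℂ \ {0}. -/
open Complex Finset

/-!
With `A = max αᵢ < 1` and `θ = arg s`, every term `τᵢ s^{αᵢ}` has argument `αᵢ θ`, which lies
within `A |θ| / 2 < π / 2` of `A θ / 2`. Rotating by `e^{-i A θ / 2}` therefore puts all terms in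
the open right half-plane, so their sum has positive real part.
-/

theorem Finset.sum_ne_zero_of_forall_re_mul_pos {ι : Type*} {t : Finset ι} {f : ι → ℂ} (u : ℂ)
    (ht : t.Nonempty) (hf : ∀ i ∈ t, 0 < (u * f i).re) : ∑ i ∈ t, f i ≠ 0 := by
  intro h
  have hre := Finset.sum_pos hf ht
  rw [← re_sum, ← mul_sum, h, mul_zero, zero_re] at hre
  exact hre.false

theorem Complex.re_exp_neg_mul_I_mul_cpow_pos {s : ℂ} (hs : s ≠ 0) {a φ : ℝ}
    (h : |a * s.arg - φ| < Real.pi / 2) : 0 < (exp (-(φ * I)) * s ^ (a : ℂ)).re := by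
  rw [cpow_def_of_ne_zero hs, ← exp_add, exp_re]
  have him : (-(φ * I) + log s * a).im = a * s.arg - φ := by
    simp only [add_im, neg_im, mul_im, ofReal_re, ofReal_im, I_re, I_im, log_im]
    ring
  rw [him]
  exact mul_pos (Real.exp_pos _) (Real.cos_pos_of_mem_Ioo (abs_lt.mp h))

theorem Complex.abs_mul_arg_sub_half_lt_pi_div_two (s : ℂ) {a A : ℝ} (ha : 0 ≤ a) (haA : a ≤ A)
    (hA : A < 1) : |a * s.arg - A * s.arg / 2| < Real.pi / 2 := by
  have hθ : |s.arg| ≤ Real.pi := abs_arg_le_pi s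
  have hdist : |a - A / 2| ≤ A / 2 := abs_le.mpr ⟨by linarith, by linarith⟩
  calc |a * s.arg - A * s.arg / 2| = |s.arg| * |a - A / 2| := by
        rw [← abs_mul]; ring_nf
    _ ≤ Real.pi * (A / 2) := mul_le_mul hθ hdist (abs_nonneg _) Real.pi_pos.le
    _ < Real.pi / 2 := by nlinarith [Real.pi_pos]

theorem stmt0_general (n : ℕ) (hn : 1 ≤ n) (τ α : Fin n → ℝ)
    (hτ : ∀ i, 0 < τ i) (hα0 : ∀ i, 0 ≤ α i) (hα1 : ∀ i, α i < 1) :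
    ∀ s : ℂ, s ≠ 0 → (∑ i, (τ i : ℂ) * s ^ (α i : ℂ)) ≠ 0 := by
  intro s hs
  have hne : (univ : Finset (Fin n)).Nonempty := ⟨⟨0, hn⟩, mem_univ _⟩
  obtain ⟨k, -, hk⟩ := exists_max_image univ α hne
  refine sum_ne_zero_of_forall_re_mul_pos (exp (-((α k * s.arg / 2 : ℝ) * I))) hne fun i _ => ?_
  have hrot := re_exp_neg_mul_I_mul_cpow_pos hs
    (abs_mul_arg_sub_half_lt_pi_div_two s (hα0 i) (hk i (mem_univ _)) (hα1 k))
  rw [mul_left_comm, re_ofReal_mul]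
  exact mul_pos (hτ i) hrot

theorem stmt0 (n : ℕ) (hn : 1 ≤ n) (τ α : Fin n → ℝ)
    (hτ : ∀ i, 0 < τ i) (hα0 : ∀ i, 0 ≤ α i) (hα1 : ∀ i, α i < 1)
    (hmono : StrictMono α) :
    ∀ s : ℂ, s ≠ 0 → (∑ i, (τ i : ℂ) * s ^ (α i : ℂ)) ≠ 0 :=
  stmt0_general n hn τ α hτ hα0 hα1
end

section
/- Let a_i, b_i > 0 for i = 1,…,n, let 0 ≤ α_1 < … < α_n < 1, and assume a_1/b_1 ≥ a_2/b_2 ≥ … ≥ a_n/b_n ≥ 0. Then for every ξ ∈ ℝ \ {0} and every s = r e^{iφ} with r > 0 and 0 < φ < π/2, one has Im(s² + ξ² · (Σ_i b_i s^{α_i})/(Σ_i a_i s^{α_i})) > 0; in particular s² + ξ² (Σ_i b_i s^{α_i})/(Σ_i a_i s^{α_i}) ≠ 0. -/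
open Complex Finset

theorem stmt2 (n : ℕ) (a b α : Fin (n + 1) → ℝ)
    (ha : ∀ i, 0 < a i) (hb : ∀ i, 0 < b i)
    (hα0 : ∀ i, 0 ≤ α i) (hα1 : ∀ i, α i < 1) (hmono : StrictMono α)
    (hratio : ∀ i j, i ≤ j → a j / b j ≤ a i / b i)
    (ξ : ℝ) (hξ : ξ ≠ 0) (r φ : ℝ) (hr : 0 < r)
    (hφ : φ ∈ Set.Ioo 0 (Real.pi / 2))
    (s : ℂ) (hs : s = (r : ℂ) * Complex.exp (Complex.I * φ)) :
    0 < (s ^ 2 + (ξ ^ 2 : ℂ) * (∑ i, (b i : ℂ) * s ^ (α i : ℂ))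
          / (∑ i, (a i : ℂ) * s ^ (α i : ℂ))).im ∧
    s ^ 2 + (ξ ^ 2 : ℂ) * (∑ i, (b i : ℂ) * s ^ (α i : ℂ))
          / (∑ i, (a i : ℂ) * s ^ (α i : ℂ)) ≠ 0 := by
  obtain ⟨hφ0, hφπ⟩ := hφ
  have hπ := Real.pi_pos
  -- s as an exponential
  have hslog : s = Complex.exp ((Real.log r : ℂ) + (φ : ℂ) * Complex.I) := by
    rw [hs, Complex.exp_add]
    congr 1
    · rw [← Complex.ofReal_exp, Real.exp_log hr]
    · ring_nf
  have hs0 : s ≠ 0 := by rw [hslog]; exact Complex.exp_ne_zero _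
  have hlog : Complex.log s = (Real.log r : ℂ) + (φ : ℂ) * Complex.I := by
    rw [hslog, Complex.log_exp] <;> simp <;> linarith
  -- powers of s
  have ht : ∀ β : ℝ, s ^ (β : ℂ)
      = ((r ^ β : ℝ) : ℂ) * Complex.exp (((β * φ : ℝ) : ℂ) * Complex.I) := by
    intro β
    rw [Complex.cpow_def_of_ne_zero hs0, hlog]
    have h1 : ((Real.log r : ℂ) + (φ : ℂ) * Complex.I) * (β : ℂ)
        = ((Real.log r * β : ℝ) : ℂ) + ((β * φ : ℝ) : ℂ) * Complex.I := by
      push_cast; ring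
    rw [h1, Complex.exp_add, ← Complex.ofReal_exp, Real.rpow_def_of_pos hr]
  have htre : ∀ β : ℝ, (s ^ (β : ℂ)).re = r ^ β * Real.cos (β * φ) := by
    intro β
    rw [ht β, Complex.mul_re, Complex.exp_ofReal_mul_I_re, Complex.exp_ofReal_mul_I_im]
    simp
  have htim : ∀ β : ℝ, (s ^ (β : ℂ)).im = r ^ β * Real.sin (β * φ) := by
    intro β
    rw [ht β, Complex.mul_im, Complex.exp_ofReal_mul_I_re, Complex.exp_ofReal_mul_I_im]
    simp
  set A : ℂ := ∑ i, (a i : ℂ) * s ^ (α i : ℂ) with hA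
  set B : ℂ := ∑ i, (b i : ℂ) * s ^ (α i : ℂ) with hB
  -- real and imaginary parts of A and B
  have hAre : A.re = ∑ i, a i * (r ^ α i * Real.cos (α i * φ)) := by
    rw [hA, Complex.re_sum]
    refine Finset.sum_congr rfl fun i _ => ?_
    simp [Complex.mul_re, htre, htim]
  have hAim : A.im = ∑ i, a i * (r ^ α i * Real.sin (α i * φ)) := by
    rw [hA, Complex.im_sum]
    refine Finset.sum_congr rfl fun i _ => ?_
    simp [Complex.mul_im, htre, htim]
  have hBre : B.re = ∑ i, b i * (r ^ α i * Real.cos (α i * φ)) := by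
    rw [hB, Complex.re_sum]
    refine Finset.sum_congr rfl fun i _ => ?_
    simp [Complex.mul_re, htre, htim]
  have hBim : B.im = ∑ i, b i * (r ^ α i * Real.sin (α i * φ)) := by
    rw [hB, Complex.im_sum]
    refine Finset.sum_congr rfl fun i _ => ?_
    simp [Complex.mul_im, htre, htim]
  -- positivity of cosines
  have hcos : ∀ i, 0 < Real.cos (α i * φ) := by
    intro i
    apply Real.cos_pos_of_mem_Ioo
    constructor
    · nlinarith [hα0 i, hα1 i]
    · nlinarith [hα0 i, hα1 i]
  have hApos : 0 < A.re := by
    rw [hAre]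
    apply Finset.sum_pos
    · intro i _
      exact mul_pos (ha i) (mul_pos (Real.rpow_pos_of_pos hr _) (hcos i))
    · exact Finset.univ_nonempty
  have hAne : A ≠ 0 := fun h => by rw [h] at hApos; simp at hApos
  have hnormSq : 0 < Complex.normSq A := Complex.normSq_pos.2 hAne
  -- key inequality: 0 ≤ B.im * A.re - B.re * A.im
  set x : Fin (n+1) → ℝ := fun i => r ^ α i * Real.cos (α i * φ) with hx
  set y : Fin (n+1) → ℝ := fun i => r ^ α i * Real.sin (α i * φ) with hy
  set F : Fin (n+1) → Fin (n+1) → ℝ :=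
    fun i j => a i * b j * (x i * y j - y i * x j) with hF
  have hFsym : ∀ i j, i ≤ j → 0 ≤ F i j + F j i := by
    intro i j hij
    have h1 : F i j + F j i = (a i * b j - a j * b i) * (x i * y j - y i * x j) := by
      simp only [hF]; ring
    rw [h1]
    apply mul_nonneg
    · have := hratio i j hij
      rw [div_le_div_iff₀ (hb j) (hb i)] at this
      linarith
    · have hxy : x i * y j - y i * x j
          = r ^ α i * r ^ α j * Real.sin ((α j - α i) * φ) := by
        simp only [hx, hy]
        rw [sub_mul, Real.sin_sub]
        ring
      rw [hxy]
      have hαij : α i ≤ α j := (hmono.le_iff_le).2 hij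
      apply mul_nonneg
      · positivity
      · apply Real.sin_nonneg_of_nonneg_of_le_pi
        · nlinarith
        · nlinarith [hα0 i, hα0 j, hα1 i, hα1 j]
  have hFtot : ∀ i j : Fin (n+1), 0 ≤ F i j + F j i := by
    intro i j
    rcases le_total i j with h | h
    · exact hFsym i j h
    · have := hFsym j i h; linarith
  have hkey : 0 ≤ B.im * A.re - B.re * A.im := by
    have hsum : B.im * A.re - B.re * A.im = ∑ i, ∑ j, F j i := by
      rw [hAre, hAim, hBre, hBim, Finset.sum_mul_sum, Finset.sum_mul_sum]
      rw [← Finset.sum_sub_distrib]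
      refine Finset.sum_congr rfl fun i _ => ?_
      rw [← Finset.sum_sub_distrib]
      refine Finset.sum_congr rfl fun j _ => ?_
      simp only [hF, hx, hy]
      ring
    have h2 : 2 * (∑ i, ∑ j, F j i) = ∑ i, ∑ j, (F i j + F j i) := by
      simp only [Finset.sum_add_distrib, two_mul]
      congr 1
      exact Finset.sum_comm
    have h3 : 0 ≤ ∑ i, ∑ j : Fin (n+1), (F i j + F j i) :=
      Finset.sum_nonneg fun i _ => Finset.sum_nonneg fun j _ => hFtot i j
    rw [hsum]
    linarith
  -- imaginary part of B / A
  have hdiv : 0 ≤ (B / A).im := by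
    rw [Complex.div_im]
    rw [div_sub_div_same]
    positivity
  -- imaginary part of s ^ 2
  have hsre : s.re = r * Real.cos φ := by
    rw [hs]
    simp [Complex.mul_re, Complex.mul_im, Complex.exp_re, Complex.exp_im]
  have hsim : s.im = r * Real.sin φ := by
    rw [hs]
    simp [Complex.mul_re, Complex.mul_im, Complex.exp_re, Complex.exp_im]
  have hsinφ : 0 < Real.sin φ := Real.sin_pos_of_pos_of_lt_pi hφ0 (by linarith)
  have hcosφ : 0 < Real.cos φ := Real.cos_pos_of_mem_Ioo ⟨by linarith, hφπ⟩
  have hs2 : 0 < (s ^ 2).im := by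
    rw [pow_two, Complex.mul_im, hsre, hsim]
    nlinarith [mul_pos (mul_pos hr hcosφ) (mul_pos hr hsinφ)]
  -- total imaginary part
  have htotal : (s ^ 2 + (ξ ^ 2 : ℂ) * B / A).im = (s ^ 2).im + ξ ^ 2 * (B / A).im := by
    rw [Complex.add_im, mul_div_assoc, Complex.mul_im]
    have h1 : ((ξ : ℂ) ^ 2).re = ξ ^ 2 := by simp [pow_two, Complex.mul_re]
    have h2 : ((ξ : ℂ) ^ 2).im = 0 := by simp [pow_two, Complex.mul_im]
    rw [h1, h2]
    ring
  have him : 0 < (s ^ 2 + (ξ ^ 2 : ℂ) * B / A).im := by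
    rw [htotal]
    have : 0 ≤ ξ ^ 2 * (B / A).im := mul_nonneg (sq_nonneg ξ) hdiv
    linarith
  refine ⟨him, fun h => ?_⟩
  rw [h] at him
  simp at him
end

section
/- Let a_i > 0 (i = 1,…,n), b_j > 0 (j = 1,…,m), with 0 ≤ α_1 < … < α_n < β_1 < … < β_m < 1 and α_i ≠ β_j for all i, j. Then for every ξ ∈ ℝ \ {0} and every s = r e^{iφ} with r > 0 and 0 < φ < π/2, Im(s² + ξ² · (Σ_j b_j s^{β_j})/(Σ_i a_i s^{α_i})) > 0, hence s² + ξ² (Σ_j b_j s^{β_j})/(Σ_i a_i s^{α_i}) ≠ 0. -/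
/-!
Write `N = ∑ b_j s^{β_j}` and `D = ∑ a_i s^{α_i}`. On the principal branch
`s^β * conj (s^α) = r^{α+β} e^{i(β-α)φ}`, so `Im (N * conj D)` is a positive combination of the
`sin ((β_j - α_i) φ)`, all positive because `0 < β_j - α_i < 1`. Hence `D ≠ 0` and
`Im (N / D) = Im (N * conj D) / |D|² > 0`; adding `Im (s²) = r² sin 2φ > 0` concludes.
-/

open Complex Finset ComplexConjugate
open scoped Real

namespace Complex

lemma im_cpow_ofReal_pos {z : ℂ} (hz : z ≠ 0) {c : ℝ} (h₀ : 0 < arg z * c)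
    (hπ : arg z * c < π) : 0 < (z ^ (c : ℂ)).im := by
  rw [cpow_ofReal_im]
  exact mul_pos (Real.rpow_pos_of_pos (norm_pos_iff.2 hz) c) (Real.sin_pos_of_pos_of_lt_pi h₀ hπ)

lemma im_cpow_ofReal_mul_conj_cpow_ofReal (z : ℂ) (α β : ℝ) :
    (z ^ (β : ℂ) * conj (z ^ (α : ℂ))).im =
      ‖z‖ ^ α * ‖z‖ ^ β * Real.sin (arg z * (β - α)) := by
  simp only [mul_im, conj_re, conj_im, cpow_ofReal_re, cpow_ofReal_im, mul_sub, Real.sin_sub]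
  ring

lemma im_div_pos_of_im_mul_conj_pos {w v : ℂ} (h : 0 < (w * conj v).im) : 0 < (w / v).im := by
  have hv : v ≠ 0 := by
    rintro rfl
    simp at h
  rw [div_eq_mul_inv, inv_def, ← mul_assoc, im_mul_ofReal]
  exact mul_pos h (inv_pos.2 (normSq_pos.2 hv))

theorem im_sum_cpow_div_sum_cpow_pos {ι κ : Type*} {s : Finset ι} {t : Finset κ}
    (hs : s.Nonempty) (ht : t.Nonempty) {z : ℂ} (hz : z ≠ 0) {a α : ι → ℝ} {b β : κ → ℝ}
    (ha : ∀ i ∈ s, 0 < a i) (hb : ∀ j ∈ t, 0 < b j)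
    (hαβ : ∀ i ∈ s, ∀ j ∈ t, 0 < arg z * (β j - α i) ∧ arg z * (β j - α i) < π) :
    0 < ((∑ j ∈ t, (b j : ℂ) * z ^ (β j : ℂ)) / ∑ i ∈ s, (a i : ℂ) * z ^ (α i : ℂ)).im := by
  apply im_div_pos_of_im_mul_conj_pos
  rw [map_sum, sum_mul_sum, im_sum]
  refine sum_pos (fun j hj => ?_) ht
  rw [im_sum]
  refine sum_pos (fun i hi => ?_) hs
  have hterm : (b j : ℂ) * z ^ (β j : ℂ) * conj ((a i : ℂ) * z ^ (α i : ℂ)) =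
      ((a i * b j : ℝ) : ℂ) * (z ^ (β j : ℂ) * conj (z ^ (α i : ℂ))) := by
    rw [map_mul, conj_ofReal]
    push_cast
    ring
  have hnorm : 0 < ‖z‖ := norm_pos_iff.2 hz
  obtain ⟨h₀, hπ⟩ := hαβ i hi j hj
  rw [hterm, im_ofReal_mul, im_cpow_ofReal_mul_conj_cpow_ofReal]
  have := Real.sin_pos_of_pos_of_lt_pi h₀ hπ
  have := ha i hi
  have := hb j hj
  positivity

end Complex

theorem stmt3_general (n m : ℕ) (a α : Fin (n + 1) → ℝ) (b β : Fin (m + 1) → ℝ)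
    (ha : ∀ i, 0 < a i) (hb : ∀ j, 0 < b j)
    (hα0 : ∀ i, 0 ≤ α i) (hmα : StrictMono α) (hmβ : StrictMono β)
    (hαβ : α (Fin.last n) < β 0) (hβ1 : β (Fin.last m) < 1)
    (ξ : ℝ) (r φ : ℝ) (hr : 0 < r)
    (hφ : φ ∈ Set.Ioo 0 (Real.pi / 2))
    (s : ℂ) (hs : s = (r : ℂ) * Complex.exp (Complex.I * φ)) :
    0 < (s ^ 2 + (ξ ^ 2 : ℂ) * (∑ j, (b j : ℂ) * s ^ (β j : ℂ))
          / (∑ i, (a i : ℂ) * s ^ (α i : ℂ))).im ∧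
    s ^ 2 + (ξ ^ 2 : ℂ) * (∑ j, (b j : ℂ) * s ^ (β j : ℂ))
          / (∑ i, (a i : ℂ) * s ^ (α i : ℂ)) ≠ 0 := by
  obtain ⟨hφ₀, hφ₁⟩ := hφ
  have hπ := Real.pi_pos
  have hs₀ : s ≠ 0 := hs ▸ mul_ne_zero (ofReal_ne_zero.2 hr.ne') (exp_ne_zero _)
  have hargs : arg s = φ := by
    rw [hs, mul_comm I, exp_mul_I]
    exact arg_mul_cos_add_sin_mul_I hr ⟨by linarith, by linarith⟩
  have hexp : ∀ i j, 0 < arg s * (β j - α i) ∧ arg s * (β j - α i) < π := by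
    intro i j
    have hlt : α i < β j :=
      ((hmα.monotone (Fin.le_last i)).trans_lt hαβ).trans_le (hmβ.monotone (Fin.zero_le j))
    have hβj : β j < 1 := (hmβ.monotone (Fin.le_last j)).trans_lt hβ1
    rw [hargs]
    constructor <;> nlinarith [hα0 i]
  have hsq : 0 < (s ^ 2).im := by
    simpa using im_cpow_ofReal_pos hs₀ (c := 2) (by rw [hargs]; linarith) (by rw [hargs]; linarith)
  have hratio := im_sum_cpow_div_sum_cpow_pos univ_nonempty univ_nonempty hs₀
    (fun i _ => ha i) (fun j _ => hb j) (fun i _ j _ => hexp i j)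
  have him : 0 < (s ^ 2 + (ξ ^ 2 : ℂ) * (∑ j, (b j : ℂ) * s ^ (β j : ℂ))
      / (∑ i, (a i : ℂ) * s ^ (α i : ℂ))).im := by
    rw [add_im, mul_div_assoc, ← ofReal_pow, im_ofReal_mul]
    exact add_pos_of_pos_of_nonneg hsq (mul_nonneg (sq_nonneg ξ) hratio.le)
  exact ⟨him, fun h => by simp [h] at him⟩

theorem stmt3 (n m : ℕ) (a α : Fin (n + 1) → ℝ) (b β : Fin (m + 1) → ℝ)
    (ha : ∀ i, 0 < a i) (hb : ∀ j, 0 < b j)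
    (hα0 : ∀ i, 0 ≤ α i) (hmα : StrictMono α) (hmβ : StrictMono β)
    (hαβ : α (Fin.last n) < β 0) (hβ1 : β (Fin.last m) < 1)
    (ξ : ℝ) (hξ : ξ ≠ 0) (r φ : ℝ) (hr : 0 < r)
    (hφ : φ ∈ Set.Ioo 0 (Real.pi / 2))
    (s : ℂ) (hs : s = (r : ℂ) * Complex.exp (Complex.I * φ)) :
    0 < (s ^ 2 + (ξ ^ 2 : ℂ) * (∑ j, (b j : ℂ) * s ^ (β j : ℂ))
          / (∑ i, (a i : ℂ) * s ^ (α i : ℂ))).im ∧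
    s ^ 2 + (ξ ^ 2 : ℂ) * (∑ j, (b j : ℂ) * s ^ (β j : ℂ))
          / (∑ i, (a i : ℂ) * s ^ (α i : ℂ)) ≠ 0 :=
  stmt3_general n m a α b β ha hb hα0 hmα hmβ hαβ hβ1 ξ r φ hr hφ s hs
end

section
/- Let a_i, b_i > 0 and 0 ≤ α_1 < … < α_n < 1 with a_1/b_1 ≥ … ≥ a_n/b_n. Then for all s real positive, the function s ↦ (Σ_i a_i s^{α_i})/(Σ_i b_i s^{α_i}) is monotone non-increasing on (0, ∞). -/
open Finset

theorem stmt12 (n : ℕ) (a b α : Fin (n + 1) → ℝ)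
    (ha : ∀ i, 0 < a i) (hb : ∀ i, 0 < b i)
    (hα0 : ∀ i, 0 ≤ α i) (hα1 : ∀ i, α i < 1) (hmono : StrictMono α)
    (hratio : ∀ i j, i ≤ j → a j / b j ≤ a i / b i) :
    AntitoneOn (fun s : ℝ => (∑ i, a i * s ^ α i) / (∑ i, b i * s ^ α i))
      (Set.Ioi 0) := by
  intro s hs t ht hst
  simp only [Set.mem_Ioi] at hs ht
  have hsum_pos : ∀ u : ℝ, 0 < u → 0 < ∑ i, b i * u ^ α i := fun u hu =>
    Finset.sum_pos (fun i _ => mul_pos (hb i) (Real.rpow_pos_of_pos hu _))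
      Finset.univ_nonempty
  simp only
  rw [div_le_div_iff₀ (hsum_pos t ht) (hsum_pos s hs)]
  have key : ∀ i j : Fin (n+1), i ≤ j →
      a i * t ^ α i * (b j * s ^ α j) + a j * t ^ α j * (b i * s ^ α i)
        ≤ a i * s ^ α i * (b j * t ^ α j) + a j * s ^ α j * (b i * t ^ α i) := by
    intro i j hij
    have hαij : α i ≤ α j := hmono.monotone hij
    have hab : a j * b i ≤ a i * b j := by
      have h := hratio i j hij
      rw [div_le_div_iff₀ (hb j) (hb i)] at h
      linarith
    have hX : t ^ α i * s ^ α j ≤ s ^ α i * t ^ α j := by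
      have h1 : (t / s) ^ α i ≤ (t / s) ^ α j :=
        Real.rpow_le_rpow_of_exponent_le (by rw [le_div_iff₀ hs]; linarith) hαij
      rw [Real.div_rpow ht.le hs.le, Real.div_rpow ht.le hs.le] at h1
      rw [div_le_div_iff₀ (Real.rpow_pos_of_pos hs _) (Real.rpow_pos_of_pos hs _)] at h1
      linarith
    nlinarith [mul_nonneg (sub_nonneg.2 hab) (sub_nonneg.2 hX)]
  have sw : ∀ F : Fin (n+1) → Fin (n+1) → ℝ,
      (2:ℝ) * (∑ i, ∑ j, F i j) = ∑ i, ∑ j, (F i j + F j i) := by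
    intro F
    rw [two_mul]
    nth_rewrite 2 [Finset.sum_comm]
    simp only [← Finset.sum_add_distrib]
  rw [Finset.sum_mul_sum, Finset.sum_mul_sum]
  refine le_of_mul_le_mul_left ?_ (by norm_num : (0:ℝ) < 2)
  rw [sw, sw]
  refine Finset.sum_le_sum fun i _ => Finset.sum_le_sum fun j _ => ?_
  rcases le_total i j with h | h
  · exact key i j h
  · have := key j i h; linarith
end

section
/- Let a > 0 and 0 < α < β < 1 (fractional Maxwell model: (1 + a D^α)σ = D^β ε). Define Φ_σ(s) = 1 + a s^α and Φ_ε(s) = s^β for complex s with Re s > 0, principal powers. Then Φ_σ(s) ≠ 0 and Φ_ε(s) ≠ 0 for all s with Re s > 0, and for all ξ ∈ ℝ and Re s > 0, s² + ξ² s^β/(1 + a s^α) ≠ 0. -/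
/-!
On the right half-plane `|arg s| < π/2`. Hence `Re s^μ > 0` for `0 ≤ μ ≤ 1`, which gives
`Re (1 + a s^α) > 0`; and for `0 < μ < 2`, `Im s^μ` has the sign of `arg s` (with `s^μ > 0` when
`arg s = 0`). If `s² + ξ² s^β / (1 + a s^α) = 0`, then
`s^(2-β) + a s^(2-β+α) = s^(2-β) (1 + a s^α) = -ξ² ≤ 0`; but both exponents lie in `(0, 2)`,
so the left side is off the closed negative real axis.
-/

open Complex
open scoped Real

lemma Real.mul_sin_pos {x : ℝ} (hx0 : x ≠ 0) (hx : |x| < π) : 0 < x * Real.sin x := by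
  rcases hx0.lt_or_gt with hneg | hpos
  · have : 0 < Real.sin (-x) :=
      Real.sin_pos_of_pos_of_lt_pi (neg_pos.2 hneg) (by linarith [neg_abs_le x])
    rw [Real.sin_neg] at this
    nlinarith
  · exact mul_pos hpos (Real.sin_pos_of_pos_of_lt_pi hpos (by linarith [le_abs_self x]))

namespace Complex

lemma re_cpow_ofReal_pos {s : ℂ} (hs : s ≠ 0) {μ : ℝ} (h : |arg s * μ| < π / 2) :
    0 < (s ^ (μ : ℂ)).re := by
  rw [cpow_ofReal_re]
  exact mul_pos (Real.rpow_pos_of_pos (norm_pos_iff.2 hs) _)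
    (Real.cos_pos_of_mem_Ioo (abs_lt.1 h))

lemma arg_mul_im_cpow_ofReal_pos {s : ℂ} (hs : s ≠ 0) {μ : ℝ} (hμ : 0 < μ) (harg : arg s ≠ 0)
    (h : |arg s * μ| < π) : 0 < arg s * (s ^ (μ : ℂ)).im := by
  have hsin := Real.mul_sin_pos (mul_ne_zero harg hμ.ne') h
  have hnorm := Real.rpow_pos_of_pos (norm_pos_iff.2 hs) μ
  have key : arg s * (s ^ (μ : ℂ)).im =
      ‖s‖ ^ μ / μ * (arg s * μ * Real.sin (arg s * μ)) := by
    rw [cpow_ofReal_im]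
    field_simp
  rw [key]
  positivity

lemma one_add_mul_cpow_re_pos {s : ℂ} (hs : 0 < s.re) {a μ : ℝ} (ha : 0 ≤ a) (hμ0 : 0 ≤ μ)
    (hμ1 : μ ≤ 1) : 0 < (1 + a * s ^ (μ : ℂ)).re := by
  have harg : |arg s| < π / 2 := abs_arg_lt_pi_div_two_iff.2 (Or.inl hs)
  have hpow : 0 < (s ^ (μ : ℂ)).re := by
    refine re_cpow_ofReal_pos (ne_zero_of_re_pos hs) (lt_of_le_of_lt ?_ harg)
    rw [abs_mul, abs_of_nonneg hμ0]
    exact mul_le_of_le_one_right (abs_nonneg _) hμ1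
  simp only [add_re, one_re, re_ofReal_mul]
  positivity

lemma cpow_add_mul_cpow_mem_slitPlane {s : ℂ} (hs : 0 < s.re) {b μ ν : ℝ} (hb : 0 ≤ b)
    (hμ0 : 0 < μ) (hμ2 : μ < 2) (hν0 : 0 < ν) (hν2 : ν < 2) :
    s ^ (μ : ℂ) + b * s ^ (ν : ℂ) ∈ slitPlane := by
  have hs0 := ne_zero_of_re_pos hs
  have harg : |arg s| < π / 2 := abs_arg_lt_pi_div_two_iff.2 (Or.inl hs)
  have small {κ : ℝ} (hκ0 : 0 < κ) (hκ2 : κ < 2) : |arg s * κ| < π := by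
    rw [abs_mul, abs_of_pos hκ0]
    nlinarith [abs_nonneg (arg s)]
  rw [mem_slitPlane_iff]
  by_cases harg0 : arg s = 0
  · left
    have hpos {κ : ℝ} : 0 < (s ^ (κ : ℂ)).re :=
      re_cpow_ofReal_pos hs0 (by simp [harg0, Real.pi_pos])
    simp only [add_re, re_ofReal_mul]
    exact add_pos_of_pos_of_nonneg hpos (mul_nonneg hb hpos.le)
  · right
    have hμ := arg_mul_im_cpow_ofReal_pos hs0 hμ0 harg0 (small hμ0 hμ2)
    have hν := arg_mul_im_cpow_ofReal_pos hs0 hν0 harg0 (small hν0 hν2)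
    have : 0 < arg s * (s ^ (μ : ℂ) + b * s ^ (ν : ℂ)).im := by
      simp only [add_im, im_ofReal_mul]
      nlinarith
    exact right_ne_zero_of_mul this.ne'

lemma cpow_sub_mul_eq_neg_of_sq_add_div_eq_zero {s Φ c β : ℂ} (hs : s ≠ 0) (hΦ : Φ ≠ 0)
    (h : s ^ 2 + c * s ^ β / Φ = 0) : s ^ (2 - β) * Φ = -c := by
  have hsq : s ^ (2 - β) * s ^ β = s ^ 2 := by
    rw [← cpow_add _ _ hs, sub_add_cancel, cpow_ofNat]
  apply mul_left_cancel₀ (cpow_ne_zero_iff.2 (Or.inl hs) : s ^ β ≠ 0)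
  field_simp at h
  linear_combination h + Φ * hsq

end Complex

theorem stmt17 (a α β : ℝ) (ha : 0 < a) (hα : 0 < α) (hαβ : α < β) (hβ : β < 1)
    (s : ℂ) (hs : 0 < s.re) :
    (1 + (a : ℂ) * s ^ (α : ℂ) ≠ 0) ∧ (s ^ (β : ℂ) ≠ 0) ∧
    ∀ ξ : ℝ, s ^ 2 + (ξ ^ 2 : ℂ) * s ^ (β : ℂ) / (1 + (a : ℂ) * s ^ (α : ℂ)) ≠ 0 := by
  have hs0 : s ≠ 0 := ne_zero_of_re_pos hs
  have hΦ : 1 + (a : ℂ) * s ^ (α : ℂ) ≠ 0 := fun h => by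
    simpa [h] using one_add_mul_cpow_re_pos hs ha.le hα.le (by linarith)
  refine ⟨hΦ, cpow_ne_zero_iff.2 (Or.inl hs0), fun ξ h => ?_⟩
  have hsum : s ^ ((2 - β : ℝ) : ℂ) + a * s ^ ((2 - β + α : ℝ) : ℂ) = -((ξ ^ 2 : ℝ) : ℂ) := by
    push_cast
    rw [← cpow_sub_mul_eq_neg_of_sq_add_div_eq_zero hs0 hΦ h, mul_add, mul_one,
      mul_left_comm, ← cpow_add _ _ hs0]
  have hslit := cpow_add_mul_cpow_mem_slitPlane hs ha.le (μ := 2 - β) (ν := 2 - β + α)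
    (by linarith) (by linarith) (by linarith) (by linarith)
  rw [hsum, neg_ofReal_mem_slitPlane] at hslit
  exact (sq_nonneg ξ).not_gt hslit
end
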